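/- Let k be a field, I a set, and f : ∏_{i∈I} k → k a k-linear map whose kernel contains the subset ∏_{i∈I∖J} {0,1} (elements with entries 0 or 1 vanishing on J) for some finite J ⊆ I, and whose kernel contains the direct sum ⊕_{i∈I∖J} k. Then the kernel of f contains all of ∏_{i∈I∖J} k, i.e. every element (a_i) with a_j = 0 for j ∈ J lies in ker f, provided ker f is open in the k-ified product topology. -/

import Mathlib

open Topology

/-!
The tuples with entries in `{0, x i}` form a compact set `K ∋ 0, x` (a product of finite sets),
so the kernel meets `K` in a relatively open neighbourhood of `0`. A basic neighbourhood of `0`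
in the product constrains only finitely many coordinates `S`, hence the kernel contains the part
of `x` off `S`; the part of `x` on `S` is finitely supported and vanishes on `J`.
-/

/-- The `k`-ification of a topological space: a set is open iff its intersection with
every compact subset `K` is open in `K`. -/
def kification (X : Type*) [TopologicalSpace X] : TopologicalSpace X :=
  ⨆ (K : Set X) (_ : IsCompact K),
    TopologicalSpace.coinduced (Subtype.val : K → X) inferInstance

theorem isOpen_kification_preimage_val {X : Type*} [TopologicalSpace X] {U K : Set X}
    (hU : IsOpen[kification X] U) (hK : IsCompact K) :
    IsOpen ((↑) ⁻¹' U : Set K) := by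
  rw [kification, isOpen_iSup_iff] at hU
  have hUK := hU K
  rw [isOpen_iSup_iff] at hUK
  exact isOpen_coinduced.mp (hUK hK)

theorem exists_finset_forall_mem_of_isOpen_preimage_val_pi {ι : Type*} {π : ι → Type*}
    [∀ i, TopologicalSpace (π i)] {K U : Set (∀ i, π i)} (hU : IsOpen ((↑) ⁻¹' U : Set K))
    {x : ∀ i, π i} (hxK : x ∈ K) (hxU : x ∈ U) :
    ∃ S : Finset ι, ∀ y ∈ K, (∀ i ∈ S, y i = x i) → y ∈ U := by
  obtain ⟨V, hVopen, hVU⟩ := isOpen_induced_iff.mp hU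
  have hxV : x ∈ V := by
    change (⟨x, hxK⟩ : K) ∈ (↑) ⁻¹' V
    rwa [hVU]
  obtain ⟨S, t, ht, hSV⟩ := isOpen_pi_iff.mp hVopen x hxV
  refine ⟨S, fun y hyK hyS => ?_⟩
  change (⟨y, hyK⟩ : K) ∈ (↑) ⁻¹' U
  rw [← hVU]
  exact hSV fun i hi => by simpa only [Set.mem_preimage, hyS i hi] using (ht i hi).2

theorem stmt_1_general (k I : Type*) [Field k] [TopologicalSpace k]
    (f : (I → k) →ₗ[k] k) (J : Finset I)
    (hopen : IsOpen[kification (I → k)] {x : I → k | f x = 0})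
    (hds : ∀ x : I → k, ({i : I | x i ≠ 0}).Finite → (∀ j ∈ J, x j = 0) → f x = 0) :
    ∀ x : I → k, (∀ j ∈ J, x j = 0) → f x = 0 := by
  intro x hx
  set K : Set (I → k) := Set.univ.pi fun i => {0, x i}
  have hK : IsCompact K := isCompact_univ_pi fun i => (Set.toFinite _).isCompact
  have hindicator_mem (s : Set I) : s.indicator x ∈ K := fun i _ => by
    by_cases hi : i ∈ s <;> simp [hi]
  obtain ⟨S, hS⟩ := exists_finset_forall_mem_of_isOpen_preimage_val_pi
    (isOpen_kification_preimage_val hopen hK) (x := 0) (fun i _ => Set.mem_insert 0 _) (map_zero f)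
  have hoff : f ((↑S : Set I)ᶜ.indicator x) = 0 :=
    hS _ (hindicator_mem _) fun i hi => by simp [hi]
  have hon : f ((↑S : Set I).indicator x) = 0 := by
    refine hds _ (S.finite_toSet.subset fun i hi => ?_) fun j hj => by simp [hx j hj]
    by_contra hiS
    exact hi (Set.indicator_of_notMem hiS x)
  rw [← Set.indicator_self_add_compl (↑S) x, map_add, hon, hoff, add_zero]

/-- If `f : ∏_{i ∈ I} k → k` is a `k`-linear map whose kernel is open in the
`k`-ification of the product topology, contains all `{0,1}`-valued tuples vanishing on a
finite set `J ⊆ I`, and contains the direct sum `⊕_{i ∈ I∖J} k` (the finitely supported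
tuples vanishing on `J`), then the kernel contains all of `∏_{i ∈ I∖J} k`: every `x` with
`x j = 0` for `j ∈ J` lies in `ker f`. -/
theorem stmt_1 (k I : Type*) [Field k] [TopologicalSpace k] [DiscreteTopology k]
    (f : (I → k) →ₗ[k] k) (J : Finset I)
    (hopen : IsOpen[kification (I → k)] {x : I → k | f x = 0})
    (h01 : ∀ x : I → k, (∀ i, x i = 0 ∨ x i = 1) → (∀ j ∈ J, x j = 0) → f x = 0)
    (hds : ∀ x : I → k, ({i : I | x i ≠ 0}).Finite → (∀ j ∈ J, x j = 0) → f x = 0) :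
    ∀ x : I → k, (∀ j ∈ J, x j = 0) → f x = 0 :=
  stmt_1_general k I f J hopen hds
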